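/- arXiv:0712.1532 — 3 statements merged into one kernel-verified Lean document; each statement's English description precedes it below -/
import Mathlib

section
/- Let D be a finite set, n ≥ 2, and let R ⊆ D^n be nonempty and contain no constant tuple, i.e. (d, d, …, d) ∉ R for every d ∈ D. Then some binary relation R' ⊆ D² derivable from R is nonempty and contains no pair of the form (d, d). -/
/-!
Lower the arity one step at a time, keeping the relation `T` nonempty and free of constant
tuples. If some tuple of `T` repeats a value, permute the two equal coordinates to the end and
identify them: that tuple survives, and a constant tuple of the result would come from a constant
tuple of `T`. Otherwise every tuple of `T` is injective, so projecting away the last coordinate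
keeps `T` nonempty, while a constant tuple of the projection (of arity at least 2) would extend
to a tuple of `T` with two equal coordinates.
-/

/-- `Derivable R S` says that the relation `S` belongs to the smallest family of
finitary relations on `D` containing `R` and closed under: permuting coordinates,
identifying the last two coordinates, and projecting away the last coordinate. -/
inductive Derivable {D : Type} {n : ℕ} (R : Set (Fin n → D)) :
    {k : ℕ} → Set (Fin k → D) → Prop
  | base : Derivable R R
  | perm {k : ℕ} (S : Set (Fin k → D)) (e : Equiv.Perm (Fin k)) :
      Derivable R S → Derivable R {t : Fin k → D | (t ∘ e) ∈ S}
  | identify {k : ℕ} (S : Set (Fin (k + 2) → D)) :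
      Derivable R S → Derivable R {t : Fin (k + 1) → D | Fin.snoc t (t (Fin.last k)) ∈ S}
  | project {k : ℕ} (S : Set (Fin (k + 1) → D)) :
      Derivable R S → Derivable R {t : Fin k → D | ∃ y : D, Fin.snoc t y ∈ S}

theorem exists_perm_apply_eq_apply_eq {α : Type*} [DecidableEq α] {a b i j : α}
    (hab : a ≠ b) (hij : i ≠ j) : ∃ σ : Equiv.Perm α, σ a = i ∧ σ b = j := by
  have hb : Equiv.swap a i b ≠ i := fun h =>
    hab ((Equiv.swap a i).injective (h.trans (Equiv.swap_apply_left a i).symm)).symm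
  refine ⟨(Equiv.swap a i).trans (Equiv.swap (Equiv.swap a i b) j), ?_, ?_⟩
  · simp only [Equiv.trans_apply, Equiv.swap_apply_left]
    exact Equiv.swap_apply_of_ne_of_ne hb.symm hij
  · simp only [Equiv.trans_apply, Equiv.swap_apply_left]

namespace Derivable

variable {D : Type} {n : ℕ} {R : Set (Fin n → D)}

theorem exists_identify_of_apply_eq {k : ℕ} {T : Set (Fin (k + 2) → D)} (hT : Derivable R T)
    (hnc : ∀ d : D, (fun _ => d) ∉ T) {t : Fin (k + 2) → D} (ht : t ∈ T) {i j : Fin (k + 2)}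
    (hij : i ≠ j) (htij : t i = t j) :
    ∃ T' : Set (Fin (k + 1) → D), Derivable R T' ∧ T'.Nonempty ∧
      ∀ d : D, (fun _ => d) ∉ T' := by
  obtain ⟨σ, hσi, hσj⟩ :=
    exists_perm_apply_eq_apply_eq (Fin.castSucc_lt_last (Fin.last k)).ne' hij
  refine ⟨_, (hT.perm T σ.symm).identify _, ⟨Fin.init (t ∘ σ), ?_⟩, fun d hd => hnc d ?_⟩
  · have hsnoc : Fin.snoc (Fin.init (t ∘ σ)) (Fin.init (t ∘ σ) (Fin.last k)) = t ∘ σ := by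
      have : Fin.init (t ∘ σ) (Fin.last k) = (t ∘ σ) (Fin.last (k + 1)) := by
        simp [Fin.init, hσi, hσj, htij]
      rw [this, Fin.snoc_init_self]
    simpa [hsnoc, Function.comp_assoc] using ht
  · have hconst : Fin.snoc (fun _ : Fin (k + 1) => d) d = fun _ : Fin (k + 2) => d :=
      Fin.snoc_init_self (q := fun _ : Fin (k + 2) => d)
    simp only [Set.mem_ofPred_eq, hconst] at hd
    exact hd

theorem exists_project_of_injective {k : ℕ} {T : Set (Fin (k + 3) → D)} (hT : Derivable R T)
    (hne : T.Nonempty) (hinj : ∀ t ∈ T, Function.Injective t) :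
    ∃ T' : Set (Fin (k + 2) → D), Derivable R T' ∧ T'.Nonempty ∧
      ∀ d : D, (fun _ => d) ∉ T' := by
  obtain ⟨t, ht⟩ := hne
  refine ⟨_, hT.project _, ⟨Fin.init t, t (Fin.last _), by rwa [Fin.snoc_init_self]⟩, ?_⟩
  rintro d ⟨y, hy⟩
  have h01 := hinj _ hy (a₁ := Fin.castSucc 0) (a₂ := Fin.castSucc 1)
    (by simp only [Fin.snoc_castSucc])
  exact absurd (congrArg Fin.val (Fin.castSucc_injective _ h01)) (by simp)

theorem exists_binary {k : ℕ} {T : Set (Fin (k + 2) → D)} (hT : Derivable R T)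
    (hne : T.Nonempty) (hnc : ∀ d : D, (fun _ => d) ∉ T) :
    ∃ R' : Set (Fin 2 → D), Derivable R R' ∧ R'.Nonempty ∧ ∀ d : D, (fun _ => d) ∉ R' := by
  induction k with
  | zero => exact ⟨T, hT, hne, hnc⟩
  | succ k ih =>
    by_cases hinj : ∀ t ∈ T, Function.Injective t
    · obtain ⟨T', hT', hne', hnc'⟩ := hT.exists_project_of_injective hne hinj
      exact ih hT' hne' hnc'
    · obtain ⟨t, ht, hninj⟩ := not_forall₂.mp hinj
      obtain ⟨i, j, htij, hij⟩ := Function.not_injective_iff.mp hninj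
      obtain ⟨T', hT', hne', hnc'⟩ := hT.exists_identify_of_apply_eq hnc ht hij htij
      exact ih hT' hne' hnc'

end Derivable

theorem stmt_2_general {D : Type} {n : ℕ} (hn : 2 ≤ n)
    (R : Set (Fin n → D)) (hne : R.Nonempty)
    (hnc : ∀ d : D, (fun _ => d) ∉ R) :
    ∃ R' : Set (Fin 2 → D), Derivable R R' ∧ R'.Nonempty ∧
      ∀ d : D, (fun _ => d) ∉ R' := by
  obtain ⟨k, rfl⟩ : ∃ k, n = k + 2 := ⟨n - 2, by omega⟩
  exact Derivable.base.exists_binary hne hnc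

/-- If `R ⊆ D^n` (`n ≥ 2`) is nonempty and contains no constant tuple, then some
binary relation derivable from `R` is nonempty and contains no pair `(d, d)`. -/
theorem stmt_2 {D : Type} [Fintype D] {n : ℕ} (hn : 2 ≤ n)
    (R : Set (Fin n → D)) (hne : R.Nonempty)
    (hnc : ∀ d : D, (fun _ => d) ∉ R) :
    ∃ R' : Set (Fin 2 → D), Derivable R R' ∧ R'.Nonempty ∧
      ∀ d : D, (fun _ => d) ∉ R' :=
  stmt_2_general hn R hne hnc
end

section
/- Let L be a finite lattice with order ⊑ on a set D, let n ≥ 1, and let f : D^n → {0,1} be a generalised 2-monotone predicate on L. Then f is supermodular on L, that is, f(a) + f(b) ≤ f(a ⊓ b) + f(a ⊔ b) for all a, b ∈ D^n, where meet and join are taken componentwise. -/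
/-!
A generalised 2-monotone predicate is the indicator of `L ∪ U`, where the first disjunct `L` is
a lower set closed under `⊔` and the second disjunct `U` is an upper set closed under `⊓`.
If `a` lies in `L ∪ U`, so does `a ⊓ b` (when `a ∈ L`) or `a ⊔ b` (when `a ∈ U`); if both `a`
and `b` lie in `L ∪ U`, then so do `a ⊓ b` and `a ⊔ b`: for the meet, either one of them lies in
the lower set `L`, or both lie in the meet-closed `U`, and dually for the join.
-/

/-- One disjunct of a generalised 2-monotone formula: either it is omitted
(`none`, which holds for no tuple), or it is given by an index set `I` together
with constants `a i`, and holds for `x` iff `cmp (x i) (a i)` for all `i ∈ I`. -/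
def disjHolds {D : Type} {n : ℕ} (cmp : D → D → Prop)
    (o : Option (Finset (Fin n) × (Fin n → D))) (x : Fin n → D) : Prop :=
  match o with
  | none => False
  | some (I, a) => ∀ i ∈ I, cmp (x i) (a i)

section LowerUnionUpper

variable {α : Type*} [Lattice α] {L U : Set α} {a b : α}

lemma inf_mem_union (hL : IsLowerSet L) (hU : InfClosed U)
    (ha : a ∈ L ∪ U) (hb : b ∈ L ∪ U) : a ⊓ b ∈ L ∪ U := by
  rcases ha with haL | haU
  · exact Or.inl (hL inf_le_left haL)
  rcases hb with hbL | hbU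
  · exact Or.inl (hL inf_le_right hbL)
  · exact Or.inr (hU haU hbU)

lemma sup_mem_union (hL : SupClosed L) (hU : IsUpperSet U)
    (ha : a ∈ L ∪ U) (hb : b ∈ L ∪ U) : a ⊔ b ∈ L ∪ U := by
  rcases ha with haU | haU
  · rcases hb with hbL | hbU
    · exact Or.inl (hL haU hbL)
    · exact Or.inr (hU le_sup_right hbU)
  · exact Or.inr (hU le_sup_left haU)

lemma inf_mem_union_or_sup_mem_union (hL : IsLowerSet L) (hU : IsUpperSet U)
    (ha : a ∈ L ∪ U) (b : α) : a ⊓ b ∈ L ∪ U ∨ a ⊔ b ∈ L ∪ U := by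
  rcases ha with haL | haU
  · exact Or.inl (Or.inl (hL inf_le_left haL))
  · exact Or.inr (Or.inr (hU le_sup_left haU))

theorem indicator_add_le_indicator_inf_add_indicator_sup
    {M : Type*} [AddCommMonoid M] [PartialOrder M] [IsOrderedAddMonoid M] {c : M} (hc : 0 ≤ c)
    (hL : IsLowerSet L) (hLsup : SupClosed L) (hU : IsUpperSet U) (hUinf : InfClosed U)
    (a b : α) :
    (L ∪ U).indicator (fun _ => c) a + (L ∪ U).indicator (fun _ => c) b ≤
      (L ∪ U).indicator (fun _ => c) (a ⊓ b) + (L ∪ U).indicator (fun _ => c) (a ⊔ b) := by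
  have hnonneg : ∀ x, 0 ≤ (L ∪ U).indicator (fun _ => c) x :=
    Set.indicator_nonneg fun _ _ => hc
  by_cases ha : a ∈ L ∪ U <;> by_cases hb : b ∈ L ∪ U
  · simp only [Set.indicator_of_mem ha, Set.indicator_of_mem hb,
      Set.indicator_of_mem (inf_mem_union hL hUinf ha hb),
      Set.indicator_of_mem (sup_mem_union hLsup hU ha hb), le_refl]
  · rw [Set.indicator_of_mem ha, Set.indicator_of_notMem hb, add_zero]
    rcases inf_mem_union_or_sup_mem_union hL hU ha b with h | h
    · rw [Set.indicator_of_mem h]; exact le_add_of_nonneg_right (hnonneg _)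
    · rw [Set.indicator_of_mem h]; exact le_add_of_nonneg_left (hnonneg _)
  · rw [Set.indicator_of_notMem ha, Set.indicator_of_mem hb, zero_add]
    rcases inf_mem_union_or_sup_mem_union hL hU hb a with h | h
    · rw [inf_comm, Set.indicator_of_mem h]; exact le_add_of_nonneg_right (hnonneg _)
    · rw [sup_comm, Set.indicator_of_mem h]; exact le_add_of_nonneg_left (hnonneg _)
  · rw [Set.indicator_of_notMem ha, Set.indicator_of_notMem hb, add_zero]
    exact add_nonneg (hnonneg _) (hnonneg _)

end LowerUnionUpper

section disjHolds

variable {D : Type} {n : ℕ} (o : Option (Finset (Fin n) × (Fin n → D)))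

lemma isLowerSet_disjHolds_le [Preorder D] :
    IsLowerSet {x | disjHolds (fun u v => u ≤ v) o x} := by
  rcases o with _ | ⟨I, c⟩
  · exact fun _ _ _ h => h
  · exact fun _ _ hxy hy i hi => (hxy i).trans (hy i hi)

lemma isUpperSet_disjHolds_ge [Preorder D] :
    IsUpperSet {x | disjHolds (fun u v => v ≤ u) o x} := by
  rcases o with _ | ⟨I, c⟩
  · exact fun _ _ _ h => h
  · exact fun _ _ hxy hx i hi => (hx i hi).trans (hxy i)

lemma supClosed_disjHolds_le [SemilatticeSup D] :
    SupClosed {x | disjHolds (fun u v => u ≤ v) o x} := by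
  rcases o with _ | ⟨I, c⟩
  · exact fun _ h _ _ => h
  · exact fun _ hx _ hy i hi => sup_le (hx i hi) (hy i hi)

lemma infClosed_disjHolds_ge [SemilatticeInf D] :
    InfClosed {x | disjHolds (fun u v => v ≤ u) o x} := by
  rcases o with _ | ⟨I, c⟩
  · exact fun _ h _ _ => h
  · exact fun _ hx _ hy i hi => le_inf (hx i hi) (hy i hi)

end disjHolds

theorem stmt_3_general {D : Type} [Lattice D] {n : ℕ}
    (f : (Fin n → D) → ℝ) (h01 : ∀ x, f x = 0 ∨ f x = 1)
    (hmon : ∃ o₁ o₂ : Option (Finset (Fin n) × (Fin n → D)),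
      ∀ x, f x = 1 ↔
        (disjHolds (fun u v => u ≤ v) o₁ x ∨ disjHolds (fun u v => v ≤ u) o₂ x)) :
    ∀ a b : Fin n → D, f a + f b ≤ f (a ⊓ b) + f (a ⊔ b) := by
  obtain ⟨o₁, o₂, hf⟩ := hmon
  set S := {x | disjHolds (fun u v => u ≤ v) o₁ x} ∪ {x | disjHolds (fun u v => v ≤ u) o₂ x}
  have hf_indicator : f = S.indicator (fun _ => 1) := by
    funext x
    by_cases hx : x ∈ S
    · rw [Set.indicator_of_mem hx]; exact (hf x).mpr hx
    · rw [Set.indicator_of_notMem hx]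
      exact (h01 x).resolve_right fun h => hx ((hf x).mp h)
  intro a b
  rw [hf_indicator]
  exact indicator_add_le_indicator_inf_add_indicator_sup zero_le_one
    (isLowerSet_disjHolds_le o₁) (supClosed_disjHolds_le o₁)
    (isUpperSet_disjHolds_ge o₂) (infClosed_disjHolds_ge o₂) a b

/-- A generalised 2-monotone predicate (with values in `{0,1} ⊆ ℝ`) on a finite
lattice is supermodular: `f a + f b ≤ f (a ⊓ b) + f (a ⊔ b)` with componentwise
meet and join. -/
theorem stmt_3 {D : Type} [Lattice D] [Fintype D] {n : ℕ} (hn : 1 ≤ n)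
    (f : (Fin n → D) → ℝ) (h01 : ∀ x, f x = 0 ∨ f x = 1)
    (hmon : ∃ o₁ o₂ : Option (Finset (Fin n) × (Fin n → D)),
      ∀ x, f x = 1 ↔
        (disjHolds (fun u v => u ≤ v) o₁ x ∨ disjHolds (fun u v => v ≤ u) o₂ x)) :
    ∀ a b : Fin n → D, f a + f b ≤ f (a ⊓ b) + f (a ⊔ b) :=
  stmt_3_general f h01 hmon
end

section
/- Let G = (V, E) be a finite vertex-transitive digraph, let r be a retraction of G with image W, and let H = (W, E ∩ (W × W)) be the induced subdigraph on W. If H is a core, then H is vertex-transitive. -/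
/-- `f` is an endomorphism of the digraph with edge relation `E`. -/
def IsEndo {V : Type} (E : V → V → Prop) (f : V → V) : Prop :=
  ∀ x y, E x y → E (f x) (f y)

/-- `g` is an automorphism of the digraph with edge relation `E`: a bijective
endomorphism whose inverse is also an endomorphism (equivalently, a bijection
preserving and reflecting edges). -/
def IsAuto {V : Type} (E : V → V → Prop) (g : V → V) : Prop :=
  Function.Bijective g ∧ ∀ x y, E x y ↔ E (g x) (g y)

/-- The digraph with edge relation `E` is vertex-transitive. -/
def VertexTransitive {V : Type} (E : V → V → Prop) : Prop :=
  ∀ u v : V, ∃ g : V → V, IsAuto E g ∧ g u = v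

/-!
Fix `u, v` in the image `W` of `r` and an automorphism `g` of `G` with `g u = v`. Then `r ∘ g`
restricts to an endomorphism `f` of `H` with `f u = v`. Since `W` is finite, some power `f^[n]`,
`n ≠ 0`, is idempotent, i.e. a retraction of `H`; as `H` is a core, `f^[n] = id`. So `f` is
bijective with inverse `f^[n - 1]`, itself an endomorphism, and `f` is an automorphism of `H`.
-/

def IsCore {V : Type} (E : V → V → Prop) : Prop :=
  ∀ s : V → V, IsEndo E s → s ∘ s = s → s = id

theorem exists_ne_zero_isIdempotentElem_pow {M : Type*} [Monoid M] [Finite M] (a : M) :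
    ∃ n ≠ 0, IsIdempotentElem (a ^ n) := by
  obtain ⟨i, j, hne, heq⟩ := Finite.exists_ne_map_eq_of_infinite (a ^ · : ℕ → M)
  wlog hij : i < j generalizing i j
  · exact this j i hne.symm heq.symm (by omega)
  obtain ⟨k, rfl⟩ := Nat.exists_eq_add_of_lt hij
  have hstep : ∀ n, i ≤ n → a ^ (n + (k + 1)) = a ^ n := fun n hn => by
    obtain ⟨m, rfl⟩ := Nat.exists_eq_add_of_le hn
    rw [add_comm i m, add_assoc, pow_add, ← add_assoc, ← heq, ← pow_add]
  have hperiodic : ∀ t n, i ≤ n → a ^ (n + t * (k + 1)) = a ^ n := fun t => by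
    induction t with
    | zero => simp
    | succ t ih =>
      intro n hn
      rw [add_mul, one_mul, ← add_assoc, hstep _ (by omega), ih n hn]
  refine ⟨(i + 1) * (k + 1), by positivity, ?_⟩
  rw [IsIdempotentElem, ← pow_add, hperiodic _ _ (by nlinarith)]

section

variable {V : Type} {E : V → V → Prop}

theorem IsEndo.comp {f g : V → V} (hf : IsEndo E f) (hg : IsEndo E g) : IsEndo E (f ∘ g) :=
  fun x y h => hf _ _ (hg x y h)

theorem IsEndo.iterate {f : V → V} (hf : IsEndo E f) (n : ℕ) : IsEndo E f^[n] := by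
  induction n with
  | zero => exact fun x y h => h
  | succ n ih => rw [Function.iterate_succ]; exact ih.comp hf

theorem IsAuto.isEndo {g : V → V} (hg : IsAuto E g) : IsEndo E g :=
  fun x y => (hg.2 x y).mp

theorem IsEndo.mapsTo_restrict {f : V → V} (hf : IsEndo E f) {s : Set V} (hs : Set.MapsTo f s s) :
    IsEndo (fun u v : s => E u v) (hs.restrict f s s) :=
  fun x y h => hf x y h

theorem IsEndo.isAuto_of_isCore [Finite V] (hE : IsCore E) {f : V → V} (hf : IsEndo E f) :
    IsAuto E f := by
  have : Finite (Function.End V) := inferInstanceAs (Finite (V → V))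
  obtain ⟨n, hn, hidem⟩ := exists_ne_zero_isIdempotentElem_pow (M := Function.End V) f
  have hid : f^[n] = id := hE _ (hf.iterate n) hidem
  obtain ⟨p, rfl⟩ := Nat.exists_eq_succ_of_ne_zero hn
  have hleft : Function.LeftInverse f^[p] f := congrFun ((Function.iterate_succ f p).symm.trans hid)
  have hright : Function.RightInverse f^[p] f :=
    congrFun ((Function.iterate_succ' f p).symm.trans hid)
  refine ⟨⟨hleft.injective, hright.surjective⟩, fun x y => ⟨hf x y, fun h => ?_⟩⟩
  simpa only [hleft x, hleft y] using hf.iterate p _ _ h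

end

/-- If `G` is a finite vertex-transitive digraph, `r` a retraction of `G` with image
`W`, and the induced subdigraph `H` on `W` is a core, then `H` is vertex-transitive. -/
theorem stmt_7 {V : Type} [Fintype V] (E : V → V → Prop)
    (hG : VertexTransitive E) (r : V → V) (hr : IsEndo E r) (hrr : r ∘ r = r)
    (hcore : ∀ s : Set.range r → Set.range r,
      IsEndo (fun u v : Set.range r => E u v) s → s ∘ s = s → s = id) :
    VertexTransitive (fun u v : Set.range r => E u v) := by
  intro u v
  obtain ⟨g, hg, hgu⟩ := hG u v
  have hmaps : Set.MapsTo (r ∘ g) (Set.range r) (Set.range r) := fun x _ => Set.mem_range_self _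
  refine ⟨hmaps.restrict _ _ _, ((hr.comp hg.isEndo).mapsTo_restrict hmaps).isAuto_of_isCore hcore,
    Subtype.ext ?_⟩
  obtain ⟨x, hx⟩ := v.2
  simp only [Set.MapsTo.val_restrict_apply, Function.comp_apply, hgu, ← hx]
  exact congrFun hrr x
end
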